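/- Let n ≥ 1, λ = (λ_1,…,λ_n) ∈ ℂⁿ, ς ∈ {+1,−1}ⁿ, a ≤ b real numbers, and r > 0. Then there exists C > 0 such that for every s ∈ ℂ with a ≤ Re s ≤ b and with |s − (λ_l − κ)| ≥ r for all 1 ≤ l ≤ n and all κ ∈ ℕ, one has |∏_{l=1}^n Γ(s − λ_l) · exp(ς_l · iπ(s − λ_l)/2)| ≤ C · (|Im s| + 1)^{n(Re s − 1/2) − Re(λ_1 + ⋯ + λ_n)}. -/

import Mathlib

/-!
Multiplying `Γ(z)` by `(z + 1) ^ (1/2 - z)`, of modulus `|z + 1| ^ (1/2 - σ) e^{t arg(z + 1)}`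
with `t arg(z + 1) = π|t|/2 + O(1)`, gives a function that is bounded on the line `Re z = 1/2`
(by the reflection formula `|Γ(1/2 + it)|² = π / cosh πt`) and on `Re z = 3/2` (by
`Γ(z) = (z - 1) Γ(z - 1)`), and is `O(e^{π|t|/2})` in between. Phragmén–Lindelöf bounds it on
the whole strip, which is Stirling's bound `|Γ(σ + it)| ≪ (1 + |t|)^{σ - 1/2} e^{-π|t|/2}` for
`1/2 ≤ σ ≤ 3/2`. The functional equation carries this bound to any vertical strip, provided one
stays at distance `r` from the poles when moving left. The factor `e^{±iπz/2}` cancels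
`e^{-π|t|/2}`, the shift by `λ` changes `(1 + |t|)^e` only by a bounded factor (Peetre's
inequality), and the bounds multiply.
-/

open Set Filter
open scoped Real ComplexConjugate

namespace Complex

lemma norm_Gamma_le_Gamma_re {s : ℂ} (hs : 0 < s.re) : ‖Gamma s‖ ≤ Real.Gamma s.re := by
  rw [Gamma_eq_integral hs, Real.Gamma_eq_integral hs, GammaIntegral]
  refine (MeasureTheory.norm_integral_le_integral_norm _).trans_eq
    (MeasureTheory.setIntegral_congr_fun measurableSet_Ioi fun x hx => ?_)
  rw [norm_mul, norm_real, Real.norm_of_nonneg (Real.exp_pos _).le, norm_cpow_eq_rpow_re_of_pos hx]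
  simp

lemma norm_Gamma_sq_mul_cosh_of_re_eq_half {s : ℂ} (hs : s.re = 1 / 2) :
    ‖Gamma s‖ ^ 2 * Real.cosh (π * s.im) = π := by
  have hconj : 1 - s = conj s :=
    Complex.ext (by simp only [sub_re, one_re, hs, conj_re]; norm_num) (by simp)
  have hsin : sin (π * s) = Real.cosh (π * s.im) := by
    have : (π : ℂ) * s = (π / 2 : ℝ) + (π * s.im : ℝ) * I :=
      Complex.ext (by simp [hs]; ring) (by simp)
    rw [this, sin_add, cos_mul_I, sin_mul_I, ofReal_cosh]
    push_cast
    simp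
  have h := Gamma_mul_Gamma_one_sub s
  rw [hconj, Gamma_conj, mul_conj, hsin, normSq_eq_norm_sq] at h
  exact_mod_cast (eq_div_iff (by exact_mod_cast (Real.cosh_pos _).ne')).mp h

lemma norm_Gamma_mul_exp_le_of_re_eq_half {s : ℂ} (hs : s.re = 1 / 2) :
    ‖Gamma s‖ * Real.exp (π * |s.im| / 2) ≤ √(2 * π) := by
  have hexp : Real.exp (π * |s.im|) ≤ 2 * Real.cosh (π * s.im) := by
    rw [← Real.cosh_abs, abs_mul, abs_of_pos Real.pi_pos, Real.cosh_eq]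
    linarith [Real.exp_pos (-(π * |s.im|))]
  refine Real.le_sqrt_of_sq_le ?_
  calc (‖Gamma s‖ * Real.exp (π * |s.im| / 2)) ^ 2 = ‖Gamma s‖ ^ 2 * Real.exp (π * |s.im|) := by
        rw [mul_pow, ← Real.exp_nat_mul]; ring_nf
    _ ≤ ‖Gamma s‖ ^ 2 * (2 * Real.cosh (π * s.im)) := by gcongr
    _ = 2 * (‖Gamma s‖ ^ 2 * Real.cosh (π * s.im)) := by ring
    _ = 2 * π := by rw [norm_Gamma_sq_mul_cosh_of_re_eq_half hs]

lemma im_mul_arg_le {u : ℂ} (hu : 0 ≤ u.re) : u.im * arg u ≤ π * |u.im| / 2 := by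
  calc u.im * arg u ≤ |u.im| * |arg u| := by rw [← abs_mul]; exact le_abs_self _
    _ ≤ |u.im| * (π / 2) := by gcongr; exact abs_arg_le_pi_div_two_iff.mpr hu
    _ = _ := by ring

lemma le_im_mul_arg {u : ℂ} (hu : 0 ≤ u.re) : π * (|u.im| - u.re) / 2 ≤ u.im * arg u := by
  rcases eq_or_ne u 0 with rfl | hu0
  · simp
  have hsame : u.im * arg u = |u.im| * |arg u| := by
    rw [← abs_mul, abs_of_nonneg]
    rcases le_or_gt 0 u.im with h | h
    · exact mul_nonneg h (arg_nonneg_iff.mpr h)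
    · exact mul_nonneg_of_nonpos_of_nonpos h.le (arg_neg_iff.mpr h).le
  -- Jordan's inequality for the angle `π/2 - |arg u|`, whose sine is `u.re / ‖u‖`
  have hθ : π / 2 - |arg u| ≤ π / 2 * (u.re / ‖u‖) := by
    have hsin : Real.sin (π / 2 - |arg u|) = u.re / ‖u‖ := by
      rw [Real.sin_pi_div_two_sub, Real.cos_abs, cos_arg hu0]
    have := Real.mul_le_sin (x := π / 2 - |arg u|) (by linarith [abs_arg_le_pi_div_two_iff.mpr hu])
      (by linarith [abs_nonneg (arg u)])
    rw [hsin] at this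
    calc π / 2 - |arg u| = π / 2 * (2 / π * (π / 2 - |arg u|)) := by field_simp
      _ ≤ π / 2 * (u.re / ‖u‖) := by gcongr
  have hnorm : |u.im| * (u.re / ‖u‖) ≤ u.re := by
    rw [mul_div_assoc', div_le_iff₀ (norm_pos_iff.mpr hu0), mul_comm]
    exact mul_le_mul_of_nonneg_left (abs_im_le_norm u) hu
  rw [hsame]
  nlinarith [abs_nonneg u.im, Real.pi_pos]

noncomputable def normalizedGamma (z : ℂ) : ℂ := Gamma z * (z + 1) ^ (1 / 2 - z)

lemma norm_normalizedGamma {z : ℂ} (hz : 0 ≤ z.re) :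
    ‖normalizedGamma z‖ =
      ‖Gamma z‖ * (‖z + 1‖ ^ (1 / 2 - z.re) * Real.exp (z.im * arg (z + 1))) := by
  have hz1 : z + 1 ≠ 0 := by
    intro h
    have := congrArg re h
    simp only [add_re, one_re, zero_re] at this
    linarith
  rw [normalizedGamma, norm_mul, norm_cpow_of_ne_zero hz1, div_eq_mul_inv, ← Real.exp_neg]
  simp [mul_comm]

lemma differentiableOn_normalizedGamma : DifferentiableOn ℂ normalizedGamma {z | 0 < z.re} := by
  intro z (hz : 0 < z.re)
  have hΓ : DifferentiableAt ℂ Gamma z := differentiableAt_Gamma _ fun m hm => by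
    have := congrArg re hm
    simp only [neg_re, natCast_re] at this
    linarith [(Nat.cast_nonneg m : (0 : ℝ) ≤ m)]
  have hslit : z + 1 ∈ slitPlane := Or.inl (by simp only [add_re, one_re]; linarith)
  exact (hΓ.mul ((differentiableAt_id.add_const 1).cpow
    ((differentiableAt_const _).sub differentiableAt_id) hslit)).differentiableWithinAt

lemma norm_normalizedGamma_le_of_re_eq_half {z : ℂ} (hz : z.re = 1 / 2) :
    ‖normalizedGamma z‖ ≤ √(2 * π) := by
  rw [norm_normalizedGamma (by rw [hz]; norm_num), hz, sub_self, Real.rpow_zero, one_mul]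
  refine le_trans ?_ (norm_Gamma_mul_exp_le_of_re_eq_half hz)
  gcongr
  simpa using im_mul_arg_le (u := z + 1) (by simp only [add_re, one_re]; linarith)

lemma norm_normalizedGamma_le_of_re_eq_three_halves {z : ℂ} (hz : z.re = 3 / 2) :
    ‖normalizedGamma z‖ ≤ √(2 * π) := by
  have hre : (z - 1).re = 1 / 2 := by simp only [sub_re, hz, one_re]; norm_num
  have hΓ : Gamma z = (z - 1) * Gamma (z - 1) := by
    simpa using Gamma_add_one (z - 1) fun h => by simp [h] at hre
  have hz1 : 0 < ‖z + 1‖ := norm_pos_iff.mpr fun h => by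
    have := congrArg re h
    simp only [add_re, hz, one_re, zero_re] at this
    linarith
  have hnorm : ‖z - 1‖ ≤ ‖z + 1‖ := by
    rw [← sq_le_sq₀ (norm_nonneg _) (norm_nonneg _), ← normSq_eq_norm_sq, ← normSq_eq_norm_sq,
      normSq_apply, normSq_apply]
    simp only [sub_re, add_re, sub_im, add_im, hz, one_re, one_im, sub_zero, add_zero]
    norm_num
  rw [norm_normalizedGamma (by rw [hz]; norm_num), hz, hΓ, norm_mul,
    show (1 / 2 - 3 / 2 : ℝ) = -1 by norm_num, Real.rpow_neg_one]
  calc ‖z - 1‖ * ‖Gamma (z - 1)‖ * (‖z + 1‖⁻¹ * Real.exp (z.im * arg (z + 1)))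
      = ‖z - 1‖ / ‖z + 1‖ * (‖Gamma (z - 1)‖ * Real.exp (z.im * arg (z + 1))) := by ring
    _ ≤ 1 * (‖Gamma (z - 1)‖ * Real.exp (π * |(z - 1).im| / 2)) := by
        gcongr
        · exact div_le_one_of_le₀ hnorm hz1.le
        · simpa using im_mul_arg_le (u := z + 1) (by simp only [add_re, one_re]; linarith)
    _ ≤ √(2 * π) := by rw [one_mul]; exact norm_Gamma_mul_exp_le_of_re_eq_half hre

lemma norm_normalizedGamma_le_mul_exp {z : ℂ} (h₁ : 1 / 2 ≤ z.re) (h₂ : z.re ≤ 3 / 2) :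
    ‖normalizedGamma z‖ ≤
      max (Real.Gamma (1 / 2)) (Real.Gamma (3 / 2)) * Real.exp (π * |z.im| / 2) := by
  have hΓ : ‖Gamma z‖ ≤ max (Real.Gamma (1 / 2)) (Real.Gamma (3 / 2)) :=
    (norm_Gamma_le_Gamma_re (by linarith)).trans <|
      Real.convexOn_Gamma.le_max_of_mem_Icc (by norm_num) (by norm_num) ⟨h₁, h₂⟩
  have hpow : ‖z + 1‖ ^ (1 / 2 - z.re) ≤ 1 := by
    refine Real.rpow_le_one_of_one_le_of_nonpos ?_ (by linarith)
    calc (1 : ℝ) ≤ (z + 1).re := by simp only [add_re, one_re]; linarith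
      _ ≤ ‖z + 1‖ := re_le_norm _
  rw [norm_normalizedGamma (by linarith)]
  gcongr
  calc ‖z + 1‖ ^ (1 / 2 - z.re) * Real.exp (z.im * arg (z + 1))
      ≤ 1 * Real.exp (π * |z.im| / 2) := by
        gcongr
        simpa using im_mul_arg_le (u := z + 1) (by simp only [add_re, one_re]; linarith)
    _ = _ := one_mul _

lemma norm_normalizedGamma_le {z : ℂ} (h₁ : 1 / 2 ≤ z.re) (h₂ : z.re ≤ 3 / 2) :
    ‖normalizedGamma z‖ ≤ √(2 * π) := by
  refine PhragmenLindelof.vertical_strip ?_ ⟨1, by norm_num; linarith [Real.pi_gt_three], π / 2, ?_⟩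
    (fun z hz => norm_normalizedGamma_le_of_re_eq_half hz)
    (fun z hz => norm_normalizedGamma_le_of_re_eq_three_halves hz) h₁ h₂
  · refine (differentiableOn_normalizedGamma.mono ?_).diffContOnCl
    refine (closure_minimal (preimage_mono Ioo_subset_Icc_self)
      (isClosed_Icc.preimage continuous_re)).trans fun z hz => ?_
    exact lt_of_lt_of_le (by norm_num) hz.1
  · refine Asymptotics.IsBigO.of_bound (max (Real.Gamma (1 / 2)) (Real.Gamma (3 / 2)))
      (eventually_inf_principal.2 (Eventually.of_forall fun z hz => ?_))
    rw [Real.norm_of_nonneg (Real.exp_pos _).le]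
    refine (norm_normalizedGamma_le_mul_exp hz.1.le hz.2.le).trans ?_
    gcongr
    rw [one_mul, mul_div_right_comm]
    gcongr
    linarith [Real.add_one_le_exp |z.im|]

noncomputable def stirlingMajorant (z : ℂ) : ℝ :=
  (1 + |z.im|) ^ (z.re - 1 / 2) * Real.exp (-(π * |z.im| / 2))

lemma norm_Gamma_le_stirlingMajorant_of_re_mem_Icc {z : ℂ} (h₁ : 1 / 2 ≤ z.re) (h₂ : z.re ≤ 3 / 2) :
    ‖Gamma z‖ ≤ √(2 * π) * (5 / 2) * Real.exp (5 * π / 4) * stirlingMajorant z := by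
  have hz1 : 0 < ‖z + 1‖ :=
    lt_of_lt_of_le (by simp only [add_re, one_re]; linarith) (re_le_norm (z + 1))
  have hG := norm_normalizedGamma_le h₁ h₂
  rw [norm_normalizedGamma (by linarith), ← le_div_iff₀ (by positivity), div_eq_mul_inv, mul_inv,
    ← Real.rpow_neg hz1.le, neg_sub, ← Real.exp_neg] at hG
  have hnorm : ‖z + 1‖ ≤ 5 / 2 * (1 + |z.im|) := by
    calc ‖z + 1‖ ≤ |(z + 1).re| + |(z + 1).im| := norm_le_abs_re_add_abs_im _
      _ ≤ 5 / 2 + |z.im| := by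
        rw [add_re, one_re, add_im, one_im, add_zero, abs_of_pos (by linarith)]
        linarith
      _ ≤ 5 / 2 * (1 + |z.im|) := by linarith [abs_nonneg z.im]
  have hpow : ‖z + 1‖ ^ (z.re - 1 / 2) ≤ 5 / 2 * (1 + |z.im|) ^ (z.re - 1 / 2) := by
    calc ‖z + 1‖ ^ (z.re - 1 / 2) ≤ (5 / 2 * (1 + |z.im|)) ^ (z.re - 1 / 2) := by
          gcongr
      _ = (5 / 2) ^ (z.re - 1 / 2) * (1 + |z.im|) ^ (z.re - 1 / 2) := by
          rw [Real.mul_rpow (by norm_num) (by positivity)]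
      _ ≤ (5 / 2) ^ (1 : ℝ) * (1 + |z.im|) ^ (z.re - 1 / 2) := by
          gcongr
          · norm_num
          · linarith
      _ = 5 / 2 * (1 + |z.im|) ^ (z.re - 1 / 2) := by rw [Real.rpow_one]
  have hexp : Real.exp (-(z.im * arg (z + 1))) ≤
      Real.exp (5 * π / 4) * Real.exp (-(π * |z.im| / 2)) := by
    rw [← Real.exp_add]
    gcongr
    have := le_im_mul_arg (u := z + 1) (by simp only [add_re, one_re]; linarith)
    simp only [add_re, add_im, one_re, one_im, add_zero] at this
    nlinarith [Real.pi_pos]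
  calc ‖Gamma z‖ ≤ √(2 * π) * (‖z + 1‖ ^ (z.re - 1 / 2) * Real.exp (-(z.im * arg (z + 1)))) := hG
    _ ≤ √(2 * π) * (5 / 2 * (1 + |z.im|) ^ (z.re - 1 / 2) *
          (Real.exp (5 * π / 4) * Real.exp (-(π * |z.im| / 2)))) := by gcongr
    _ = _ := by rw [stirlingMajorant]; ring

lemma stirlingMajorant_nonneg (z : ℂ) : 0 ≤ stirlingMajorant z := by
  unfold stirlingMajorant; positivity

lemma stirlingMajorant_add_one (z : ℂ) :
    stirlingMajorant (z + 1) = (1 + |z.im|) * stirlingMajorant z := by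
  simp only [stirlingMajorant, add_re, add_im, one_re, one_im, add_zero]
  rw [show z.re + 1 - 1 / 2 = z.re - 1 / 2 + 1 by ring, Real.rpow_add_one (by positivity)]
  ring

lemma norm_Gamma_add_one_le {z : ℂ} {C K : ℝ} (hz : z ≠ 0)
    (hΓ : ‖Gamma z‖ ≤ C * stirlingMajorant z) (hK : ‖z‖ ≤ K * (1 + |z.im|)) :
    ‖Gamma (z + 1)‖ ≤ K * C * stirlingMajorant (z + 1) := by
  rw [Gamma_add_one z hz, norm_mul, stirlingMajorant_add_one]
  calc ‖z‖ * ‖Gamma z‖ ≤ K * (1 + |z.im|) * (C * stirlingMajorant z) :=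
        mul_le_mul hK hΓ (norm_nonneg _) ((norm_nonneg _).trans hK)
    _ = _ := by ring

lemma norm_Gamma_le_of_norm_Gamma_add_one_le {z : ℂ} {C c : ℝ} (hc : 0 < c)
    (hz : c * (1 + |z.im|) ≤ ‖z‖) (hΓ : ‖Gamma (z + 1)‖ ≤ C * stirlingMajorant (z + 1)) :
    ‖Gamma z‖ ≤ C / c * stirlingMajorant z := by
  have hz0 : z ≠ 0 := norm_pos_iff.mp (lt_of_lt_of_le (by positivity) hz)
  rw [Gamma_add_one z hz0, norm_mul, stirlingMajorant_add_one] at hΓ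
  have h := (mul_le_mul_of_nonneg_right hz (norm_nonneg (Gamma z))).trans hΓ
  rw [div_mul_eq_mul_div, le_div_iff₀ hc]
  refine le_of_mul_le_mul_left ?_ (by positivity : 0 < 1 + |z.im|)
  linarith

lemma div_one_add_mul_one_add_abs_im_le_norm {z : ℂ} {r : ℝ} (hr : 0 < r) (hz : r ≤ ‖z‖) :
    r / (1 + r) * (1 + |z.im|) ≤ ‖z‖ := by
  rw [div_mul_eq_mul_div, div_le_iff₀ (by positivity)]
  nlinarith [abs_im_le_norm z]

lemma exists_norm_Gamma_le_of_half_le_re (N : ℕ) : ∃ C, 0 < C ∧ ∀ z : ℂ, 1 / 2 ≤ z.re →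
    z.re ≤ N + 3 / 2 → ‖Gamma z‖ ≤ C * stirlingMajorant z := by
  induction N with
  | zero =>
    exact ⟨_, by positivity, fun z h₁ h₂ =>
      norm_Gamma_le_stirlingMajorant_of_re_mem_Icc h₁ (by simpa using h₂)⟩
  | succ N ih =>
    obtain ⟨C, hC, hΓ⟩ := ih
    refine ⟨(N + 5 / 2) * C, by positivity, fun z h₁ h₂ => ?_⟩
    obtain ⟨w, rfl⟩ : ∃ w, z = w + 1 := ⟨z - 1, by ring⟩
    rcases le_or_gt (w + 1).re (N + 3 / 2) with h | h
    · refine (hΓ _ h₁ h).trans ?_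
      gcongr
      · exact stirlingMajorant_nonneg _
      · nlinarith
    · simp only [add_re, one_re] at h₁ h₂ h
      push_cast at h₂
      refine norm_Gamma_add_one_le (fun hw => ?_) (hΓ w (by linarith) (by linarith)) ?_
      · rw [hw, zero_re] at h
        linarith
      · calc ‖w‖ ≤ |w.re| + |w.im| := norm_le_abs_re_add_abs_im w
          _ ≤ (N + 5 / 2) * (1 + |w.im|) := by
            rw [abs_of_pos (by linarith)]
            nlinarith [abs_nonneg w.im, (Nat.cast_nonneg N : (0 : ℝ) ≤ N)]

lemma exists_norm_Gamma_le_of_le_norm_add_nat {r : ℝ} (hr : 0 < r) (M N : ℕ) :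
    ∃ C, 0 < C ∧ ∀ z : ℂ, 1 / 2 - M ≤ z.re → z.re ≤ N + 3 / 2 → (∀ k : ℕ, r ≤ ‖z + k‖) →
      ‖Gamma z‖ ≤ C * stirlingMajorant z := by
  induction M with
  | zero =>
    obtain ⟨C, hC, hΓ⟩ := exists_norm_Gamma_le_of_half_le_re N
    exact ⟨C, hC, fun z h₁ h₂ _ => hΓ z (by simpa using h₁) h₂⟩
  | succ M ih =>
    obtain ⟨C, hC, hΓ⟩ := ih
    have hc : 0 < r / (1 + r) := by positivity
    refine ⟨C / (r / (1 + r)), by positivity, fun z h₁ h₂ hz => ?_⟩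
    push_cast at h₁
    rcases le_or_gt (1 / 2 - M : ℝ) z.re with h | h
    · refine (hΓ z h h₂ hz).trans ?_
      gcongr
      · exact stirlingMajorant_nonneg _
      · exact le_div_self hC.le hc ((div_le_one (by positivity)).mpr (by linarith))
    · refine norm_Gamma_le_of_norm_Gamma_add_one_le hc
        (div_one_add_mul_one_add_abs_im_le_norm hr (by simpa using hz 0)) (hΓ (z + 1) ?_ ?_ ?_)
      · simp only [add_re, one_re]; linarith
      · simp only [add_re, one_re]; linarith [(Nat.cast_nonneg N : (0 : ℝ) ≤ N)]
      · intro k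
        simpa [add_assoc, add_comm (1 : ℂ)] using hz (k + 1)

theorem exists_norm_Gamma_le_stirlingMajorant (a b : ℝ) {r : ℝ} (hr : 0 < r) :
    ∃ C, 0 < C ∧ ∀ z : ℂ, a ≤ z.re → z.re ≤ b → (∀ k : ℕ, r ≤ ‖z + k‖) →
      ‖Gamma z‖ ≤ C * stirlingMajorant z := by
  obtain ⟨C, hC, hΓ⟩ := exists_norm_Gamma_le_of_le_norm_add_nat hr ⌈1 / 2 - a⌉₊ ⌈b⌉₊
  exact ⟨C, hC, fun z h₁ h₂ => hΓ z (by linarith [Nat.le_ceil (1 / 2 - a)])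
    (by linarith [Nat.le_ceil b])⟩

lemma one_add_abs_sub_rpow_le (x y e : ℝ) :
    (1 + |x - y|) ^ e ≤ (1 + |y|) ^ |e| * (1 + |x|) ^ e := by
  rcases le_total 0 e with he | he
  · rw [abs_of_nonneg he, ← Real.mul_rpow (by positivity) (by positivity)]
    gcongr
    nlinarith [abs_sub x y, abs_nonneg x, abs_nonneg y, mul_nonneg (abs_nonneg x) (abs_nonneg y)]
  · have hx : 1 + |x| ≤ (1 + |y|) * (1 + |x - y|) := by
      nlinarith [abs_sub_abs_le_abs_sub x y, abs_nonneg (x - y), abs_nonneg y,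
        mul_nonneg (abs_nonneg (x - y)) (abs_nonneg y)]
    calc (1 + |x - y|) ^ e = (1 + |y|) ^ |e| * ((1 + |y|) * (1 + |x - y|)) ^ e := by
          rw [abs_of_nonpos he, Real.mul_rpow (by positivity) (by positivity), ← mul_assoc,
            ← Real.rpow_add (by positivity), neg_add_cancel, Real.rpow_zero, one_mul]
      _ ≤ (1 + |y|) ^ |e| * (1 + |x|) ^ e := by
          exact mul_le_mul_of_nonneg_left (Real.rpow_le_rpow_of_nonpos (by positivity) hx he)
            (by positivity)

lemma norm_exp_mul_I_mul_pi_div_two_le {ε : ℝ} (hε : |ε| ≤ 1) (z : ℂ) :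
    ‖exp (ε * I * π * z / 2)‖ ≤ Real.exp (π * |z.im| / 2) := by
  rw [norm_exp]
  gcongr
  simp only [div_ofNat_re, mul_re, mul_im, ofReal_re, ofReal_im, I_re, I_im]
  have h : -(ε * z.im) ≤ |z.im| :=
    (neg_le_abs _).trans (by rw [abs_mul]; exact mul_le_of_le_one_left (abs_nonneg _) hε)
  nlinarith [Real.pi_pos]

lemma norm_Gamma_mul_exp_le {z : ℂ} {C ε : ℝ} (hε : |ε| ≤ 1)
    (hΓ : ‖Gamma z‖ ≤ C * stirlingMajorant z) :
    ‖Gamma z * exp (ε * I * π * z / 2)‖ ≤ C * (1 + |z.im|) ^ (z.re - 1 / 2) := by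
  rw [norm_mul]
  calc ‖Gamma z‖ * ‖exp (ε * I * π * z / 2)‖
      ≤ C * stirlingMajorant z * Real.exp (π * |z.im| / 2) :=
        mul_le_mul hΓ (norm_exp_mul_I_mul_pi_div_two_le hε z) (norm_nonneg _)
          ((norm_nonneg _).trans hΓ)
    _ = C * (1 + |z.im|) ^ (z.re - 1 / 2) := by
        rw [stirlingMajorant, mul_assoc, mul_assoc, ← Real.exp_add, neg_add_cancel, Real.exp_zero,
          mul_one]

lemma exists_norm_Gamma_sub_mul_exp_le (a b : ℝ) {r : ℝ} (hr : 0 < r) (μ : ℂ) {ε : ℝ}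
    (hε : |ε| ≤ 1) :
    ∃ C, 0 < C ∧ ∀ s : ℂ, a ≤ s.re → s.re ≤ b → (∀ k : ℕ, r ≤ ‖s - (μ - k)‖) →
      ‖Gamma (s - μ) * exp (ε * I * π * (s - μ) / 2)‖ ≤
        C * (1 + |s.im|) ^ (s.re - 1 / 2 - μ.re) := by
  obtain ⟨C, hC, hΓ⟩ := exists_norm_Gamma_le_stirlingMajorant (a - μ.re) (b - μ.re) hr
  set E := max |a - μ.re - 1 / 2| |b - μ.re - 1 / 2|
  refine ⟨C * (1 + |μ.im|) ^ E, by positivity, fun s h₁ h₂ hs => ?_⟩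
  have hz := norm_Gamma_mul_exp_le hε <| hΓ (s - μ) (by simp only [sub_re]; linarith)
    (by simp only [sub_re]; linarith) fun k => by simpa [sub_add] using hs k
  have hE : |s.re - 1 / 2 - μ.re| ≤ E := abs_le_max_abs_abs (by linarith) (by linarith)
  refine hz.trans ?_
  simp only [sub_re, sub_im]
  calc C * (1 + |s.im - μ.im|) ^ (s.re - μ.re - 1 / 2)
      ≤ C * ((1 + |μ.im|) ^ |s.re - 1 / 2 - μ.re| * (1 + |s.im|) ^ (s.re - 1 / 2 - μ.re)) := by
        rw [sub_right_comm]
        gcongr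
        exact one_add_abs_sub_rpow_le _ _ _
    _ ≤ C * ((1 + |μ.im|) ^ E * (1 + |s.im|) ^ (s.re - 1 / 2 - μ.re)) := by
        gcongr
        linarith [abs_nonneg μ.im]
    _ = _ := by ring

end Complex

theorem stmt_5 (n : ℕ) (lam : Fin n → ℂ)
    (eps : Fin n → ℝ) (heps : ∀ l, eps l = 1 ∨ eps l = -1)
    (a b : ℝ) (r : ℝ) (hr : 0 < r) :
    ∃ C : ℝ, 0 < C ∧ ∀ s : ℂ, a ≤ s.re → s.re ≤ b →
      (∀ l : Fin n, ∀ κ : ℕ, r ≤ ‖s - (lam l - κ)‖) →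
      ‖∏ l, Complex.Gamma (s - lam l) *
          Complex.exp ((eps l : ℂ) * Complex.I * Real.pi * (s - lam l) / 2)‖ ≤
        C * (|s.im| + 1) ^ ((n : ℝ) * (s.re - 1 / 2) - (∑ l, lam l).re) := by
  choose D hD hbound using fun l => Complex.exists_norm_Gamma_sub_mul_exp_le a b hr (lam l)
    (ε := eps l) ((heps l).elim (fun h => by simp [h]) fun h => by simp [h])
  refine ⟨∏ l, D l, Finset.prod_pos fun l _ => hD l, fun s h₁ h₂ hs => ?_⟩
  have hexponent : ∑ l, (s.re - 1 / 2 - (lam l).re) = n * (s.re - 1 / 2) - (∑ l, lam l).re := by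
    simp only [Finset.sum_sub_distrib, Finset.sum_const, Finset.card_univ, Fintype.card_fin,
      nsmul_eq_mul, Complex.re_sum]
    ring
  rw [norm_prod, add_comm |s.im|, ← hexponent, Real.rpow_sum_of_pos (by positivity),
    ← Finset.prod_mul_distrib]
  exact Finset.prod_le_prod (fun _ _ => norm_nonneg _) fun l _ => hbound l s h₁ h₂ (hs l)
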